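/- Let l ≥ 3 and let a, b_1, …, b_l be integers (indices cyclic mod l) with b_i ≥ 0 and a + b_i ≥ 0 for all i. If l·a² + 2a·Σ b_i + 2·Σ b_i b_{i+1} + (l−2)a + 2·Σ b_i = 2, then a = 0 and exactly one b_i equals 1 while all others are 0. -/

import Mathlib

/-!
With `S = ∑ b i` and `T = ∑ b i * b (i + 1)`, summing `0 ≤ (a + b i) * (a + b (i + 1))` around
the polygon gives `Q := l * a ^ 2 + 2 * a * S + T ≥ 0`, and the equation reads
`Q + T + (l - 2) * a + 2 * S = 2`. For `a ≥ 1` already `Q ≥ l ≥ 3`; for `a ≤ -1`, summing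
`0 ≤ a + b i` gives `S ≥ -l * a`, so `(l - 2) * a + 2 * S ≥ -(l + 2) * a ≥ 5`. Hence `a = 0` and
`S + T = 1`; since `S = 0` forces `T = 0`, we get `S = 1`, i.e. a single `b i` equals `1`.
-/

open Finset

theorem Finset.sum_range_comp_succ_mod {M : Type*} [AddCommMonoid M] (l : ℕ) (f : ℕ → M) :
    ∑ i ∈ range l, f ((i + 1) % l) = ∑ i ∈ range l, f i := by
  rcases l with _ | m
  · simp
  rw [sum_range_succ, sum_range_succ', Nat.mod_self]
  congr 1
  exact sum_congr rfl fun i hi => by rw [Nat.mod_eq_of_lt (by have := mem_range.mp hi; omega)]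

theorem Finset.sum_range_add_mul_add_succ_mod {R : Type*} [CommRing R] (l : ℕ) (a : R) (b : ℕ → R) :
    ∑ i ∈ range l, (a + b i) * (a + b ((i + 1) % l)) =
      l * a ^ 2 + 2 * a * ∑ i ∈ range l, b i + ∑ i ∈ range l, b i * b ((i + 1) % l) := by
  have hshift := sum_range_comp_succ_mod l b
  simp only [add_mul, mul_add, sum_add_distrib, ← mul_sum, ← sum_mul, hshift, sum_const, card_range,
    nsmul_eq_mul]
  ring

theorem Finset.exists_eq_one_of_sum_eq_one {ι : Type*} [DecidableEq ι] {s : Finset ι} {f : ι → ℤ}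
    (hf : ∀ i ∈ s, 0 ≤ f i) (h : ∑ i ∈ s, f i = 1) :
    ∃ i ∈ s, f i = 1 ∧ ∀ j ∈ s, j ≠ i → f j = 0 := by
  obtain ⟨i, hi, hfi⟩ : ∃ i ∈ s, f i ≠ 0 := by
    by_contra! hc
    rw [sum_eq_zero hc] at h
    exact zero_ne_one h
  have hrest : 0 ≤ ∑ j ∈ s.erase i, f j := sum_nonneg fun j hj => hf j (mem_of_mem_erase hj)
  have hsplit := add_sum_erase s f hi
  have hfi1 : f i = 1 := by have := hf i hi; omega
  refine ⟨i, hi, hfi1, fun j hj hji => ?_⟩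
  have hrest0 : ∑ j ∈ s.erase i, f j = 0 := by omega
  exact (sum_eq_zero_iff_of_nonneg fun j hj => hf j (mem_of_mem_erase hj)).mp hrest0 j
    (mem_erase.mpr ⟨hji, hj⟩)

/-- Admissible states of the polygon graph P_l with A(a,b)+B(a,b) = 2:
all face variables vanish and exactly one vertex variable equals 1. -/
theorem stmt_16 (l : ℕ) (hl : 3 ≤ l) (a : ℤ) (b : ℕ → ℤ)
    (hb : ∀ i < l, 0 ≤ b i) (hab : ∀ i < l, 0 ≤ a + b i)
    (h : (l : ℤ) * a ^ 2 + 2 * a * (∑ i ∈ Finset.range l, b i)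
      + 2 * (∑ i ∈ Finset.range l, b i * b ((i + 1) % l))
      + ((l : ℤ) - 2) * a + 2 * (∑ i ∈ Finset.range l, b i) = 2) :
    a = 0 ∧ ∃ i < l, b i = 1 ∧ ∀ j < l, j ≠ i → b j = 0 := by
  set S := ∑ i ∈ range l, b i
  set T := ∑ i ∈ range l, b i * b ((i + 1) % l)
  have hb' : ∀ i ∈ range l, 0 ≤ b i := fun i hi => hb i (mem_range.mp hi)
  have hnext : ∀ i, (i + 1) % l < l := fun i => Nat.mod_lt _ (by omega)
  have hS : 0 ≤ S := sum_nonneg hb'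
  have hT : 0 ≤ T := sum_nonneg fun i hi => mul_nonneg (hb' i hi) (hb _ (hnext i))
  have hlin : 0 ≤ (l : ℤ) * a + S := by
    simpa [sum_add_distrib] using sum_nonneg fun i hi => hab i (mem_range.mp hi)
  have hquad : 0 ≤ (l : ℤ) * a ^ 2 + 2 * a * S + T := by
    rw [← sum_range_add_mul_add_succ_mod]
    exact sum_nonneg fun i hi => mul_nonneg (hab i (mem_range.mp hi)) (hab _ (hnext i))
  have hL : (3 : ℤ) ≤ l := by exact_mod_cast hl
  obtain rfl : a = 0 := by
    rcases lt_trichotomy a 0 with hneg | hzero | hpos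
    · nlinarith
    · exact hzero
    · nlinarith
  have hS1 : S = 1 := by
    have hST : S + T = 1 := by linarith
    have hS0 : S ≠ 0 := fun hS0 => by
      have hbz := (sum_eq_zero_iff_of_nonneg hb').mp hS0
      have hT0 : T = 0 := sum_eq_zero fun i hi => by rw [hbz i hi, zero_mul]
      omega
    omega
  obtain ⟨i, hi, hbi, hrest⟩ := exists_eq_one_of_sum_eq_one hb' hS1
  exact ⟨rfl, i, mem_range.mp hi, hbi, fun j hj hji => hrest j (mem_range.mpr hj) hji⟩
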